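/- Let d ≥ 1 and let a, b, c ∈ ℝ. Suppose the quadratic form q(ξ,y) = a|ξ|² + b⟨ξ,y⟩ + c|y|² on ℝ^d × ℝ^d satisfies −q(ξ,y) − ⟨y + ξ, ∇_ξq(ξ,y)⟩ + (1/2)|∇_yq(ξ,y)|² = 0 for all ξ, y ∈ ℝ^d, and that q is positive definite, i.e. q(ξ,y) > 0 whenever (ξ,y) ≠ (0,0). Then a = 6, b = 6 and c = 2. -/

import Mathlib

/-- `i`-th component of the gradient of `q(ξ,y)` with respect to `ξ`. -/
noncomputable def gradFst {d : ℕ} (q : (Fin d → ℝ) → (Fin d → ℝ) → ℝ)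
    (ξ y : Fin d → ℝ) (i : Fin d) : ℝ :=
  fderiv ℝ (fun ξ' => q ξ' y) ξ (Pi.single i 1)

/-- `i`-th component of the gradient of `q(ξ,y)` with respect to `y`. -/
noncomputable def gradSnd {d : ℕ} (q : (Fin d → ℝ) → (Fin d → ℝ) → ℝ)
    (ξ y : Fin d → ℝ) (i : Fin d) : ℝ :=
  fderiv ℝ (fun y' => q ξ y') y (Pi.single i 1)

/-- Directional derivative of a quadratic polynomial in the coordinates. -/
lemma quadDeriv {d : ℕ} (α β C : ℝ) (z x : Fin d → ℝ) (i : Fin d) :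
    fderiv ℝ (fun x' : Fin d → ℝ => α * ∑ j, x' j ^ 2 + β * ∑ j, x' j * z j + C) x (Pi.single i 1)
      = 2 * α * x i + β * z i := by
  have hj : ∀ j : Fin d, HasFDerivAt (fun x' : Fin d → ℝ => α * x' j ^ 2 + β * (x' j * z j))
      ((2 * α * x j + β * z j) • (ContinuousLinearMap.proj j : (Fin d → ℝ) →L[ℝ] ℝ)) x := by
    intro j
    have hp : HasFDerivAt (fun x' : Fin d → ℝ => x' j)
        (ContinuousLinearMap.proj (R := ℝ) j : (Fin d → ℝ) →L[ℝ] ℝ) x :=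
      hasFDerivAt_apply j x
    have h2 := ((hp.mul hp).const_mul α).add ((hp.mul_const (z j)).const_mul β)
    convert h2 using 1 <;> try rfl
    · funext x'; simp only [Pi.add_apply, Pi.mul_apply]; ring
    · ext v
      simp [ContinuousLinearMap.proj_apply]
      ring
  have key : (fun x' : Fin d → ℝ => α * ∑ j, x' j ^ 2 + β * ∑ j, x' j * z j + C)
      = fun x' => (∑ j, (α * x' j ^ 2 + β * (x' j * z j))) + C := by
    funext x'
    rw [Finset.sum_add_distrib, ← Finset.mul_sum, ← Finset.mul_sum]
  have h : HasFDerivAt (fun x' : Fin d → ℝ => α * ∑ j, x' j ^ 2 + β * ∑ j, x' j * z j + C)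
      (∑ j, ((2 * α * x j + β * z j) • (ContinuousLinearMap.proj j : (Fin d → ℝ) →L[ℝ] ℝ))) x := by
    rw [key]
    exact (HasFDerivAt.fun_sum (fun j _ => hj j)).add_const C
  rw [h.fderiv]
  simp [ContinuousLinearMap.sum_apply, Pi.single_apply, Finset.sum_ite_eq', mul_comm]

/-- core algebraic step in the paper's Lemma 3.2: if the quadratic form
`q(ξ,y) = a|ξ|² + b⟨ξ,y⟩ + c|y|²` satisfies `−q − ⟨y + ξ, ∇_ξq⟩ + (1/2)|∇_yq|² = 0`
everywhere and is positive definite, then `a = 6`, `b = 6` and `c = 2`. -/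
theorem stmt8 (d : ℕ) (hd : 1 ≤ d) (a b c : ℝ)
    (q : (Fin d → ℝ) → (Fin d → ℝ) → ℝ)
    (hq : ∀ ξ y, q ξ y = a * ∑ i, ξ i ^ 2 + b * ∑ i, ξ i * y i + c * ∑ i, y i ^ 2)
    (heq : ∀ ξ y, -q ξ y - ∑ i, (y i + ξ i) * gradFst q ξ y i
        + (1 / 2) * ∑ i, (gradSnd q ξ y i) ^ 2 = 0)
    (hpos : ∀ ξ y, ¬(ξ = 0 ∧ y = 0) → 0 < q ξ y) :
    a = 6 ∧ b = 6 ∧ c = 2 := by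
  -- gradient formulas
  have gF : ∀ ξ y i, gradFst q ξ y i = 2 * a * ξ i + b * y i := by
    intro ξ y i
    unfold gradFst
    have h1 : (fun ξ' => q ξ' y)
        = fun ξ' : Fin d → ℝ => a * ∑ j, ξ' j ^ 2 + b * ∑ j, ξ' j * y j
            + (c * ∑ j, y j ^ 2) := by
      funext ξ'; rw [hq]
    rw [h1, quadDeriv]
  have gS : ∀ ξ y i, gradSnd q ξ y i = 2 * c * y i + b * ξ i := by
    intro ξ y i
    unfold gradSnd
    have h1 : (fun y' => q ξ y')
        = fun y' : Fin d → ℝ => c * ∑ j, y' j ^ 2 + b * ∑ j, y' j * ξ j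
            + (a * ∑ j, ξ j ^ 2) := by
      funext y'
      rw [hq, show (∑ j, ξ j * y' j) = ∑ j, y' j * ξ j from
        Finset.sum_congr rfl (fun j _ => mul_comm _ _)]
      ring
    rw [h1, quadDeriv]
  -- master polynomial identity in the three scalar invariants
  have master : ∀ ξ y : Fin d → ℝ,
      (b ^ 2 / 2 - 3 * a) * (∑ i, ξ i ^ 2) + (2 * b * c - 2 * a - 2 * b) * (∑ i, ξ i * y i)
        + (2 * c ^ 2 - b - c) * (∑ i, y i ^ 2) = 0 := by
    intro ξ y
    have h := heq ξ y
    simp only [gF, gS, hq] at h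
    have h1 : ∑ i, (y i + ξ i) * (2 * a * ξ i + b * y i)
        = 2 * a * (∑ i, ξ i ^ 2) + (2 * a + b) * (∑ i, ξ i * y i) + b * (∑ i, y i ^ 2) := by
      rw [Finset.mul_sum, Finset.mul_sum, Finset.mul_sum, ← Finset.sum_add_distrib,
        ← Finset.sum_add_distrib]
      exact Finset.sum_congr rfl fun i _ => by ring
    have h2 : ∑ i, (2 * c * y i + b * ξ i) ^ 2
        = b ^ 2 * (∑ i, ξ i ^ 2) + 4 * b * c * (∑ i, ξ i * y i)
            + 4 * c ^ 2 * (∑ i, y i ^ 2) := by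
      rw [Finset.mul_sum, Finset.mul_sum, Finset.mul_sum, ← Finset.sum_add_distrib,
        ← Finset.sum_add_distrib]
      exact Finset.sum_congr rfl fun i _ => by ring
    rw [h1, h2] at h
    linarith
  -- the basis vector
  set i0 : Fin d := ⟨0, hd⟩ with hi0
  set e : Fin d → ℝ := Pi.single i0 1 with he
  have he_i0 : e i0 = 1 := by simp [he]
  have hS1 : ∑ i, e i ^ 2 = 1 := by
    simp [he, Pi.single_apply, apply_ite (· ^ (2:ℕ))]
  have hS2 : ∑ i, e i * e i = 1 := by
    have := hS1
    simpa [pow_two] using this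
  have hne : e ≠ 0 := by
    intro h0
    have : e i0 = 0 := by rw [h0]; rfl
    rw [he_i0] at this; norm_num at this
  -- three coefficient equations
  have E1 : b ^ 2 / 2 - 3 * a = 0 := by
    have := master e 0
    simpa [hS1] using this
  have E2 : 2 * c ^ 2 - b - c = 0 := by
    have := master 0 e
    simpa [hS1] using this
  have E3 : 2 * b * c - 2 * a - 2 * b = 0 := by
    have := master e e
    rw [hS1, hS2, E1] at this
    linarith [E2]
  -- positivity facts
  have P1 : 0 < a := by
    have h := hpos e 0 (by intro ⟨h1, _⟩; exact hne h1)
    rw [hq] at h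
    simpa [hS1] using h
  have P2 : 0 < a - b + c := by
    have h := hpos e (-e) (by intro ⟨h1, _⟩; exact hne h1)
    rw [hq] at h
    have hS2' : ∑ i, e i * (-e) i = -1 := by
      rw [show (∑ i, e i * (-e) i) = -∑ i, e i * e i from by
        rw [← Finset.sum_neg_distrib]; exact Finset.sum_congr rfl fun i _ => by simp]
      rw [hS2]
    have hS3' : ∑ i, (-e) i ^ 2 = 1 := by
      rw [show (∑ i, (-e) i ^ 2) = ∑ i, e i ^ 2 from
        Finset.sum_congr rfl fun i _ => by simp]
      exact hS1
    rw [hS1, hS2', hS3'] at h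
    linarith
  -- solve the system
  have hb2 : b ^ 2 = 6 * a := by linarith
  have habc : a + b = b * c := by linarith
  have hbc : b = 2 * c ^ 2 - c := by linarith
  have hbne : b ≠ 0 := by
    intro h0
    rw [h0] at hb2
    norm_num at hb2
    linarith
  have hb6 : b = 6 * c - 6 := by
    have : b * (b - (6 * c - 6)) = 0 := by nlinarith [hb2, habc]
    rcases mul_eq_zero.mp this with h | h
    · exact absurd h hbne
    · linarith
  have hcq : (c - 2) * (2 * c - 3) = 0 := by nlinarith [hbc, hb6]
  rcases mul_eq_zero.mp hcq with h | h
  · have hc : c = 2 := by linarith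
    have hb : b = 6 := by rw [hc] at hb6; linarith
    have ha : a = 6 := by rw [hb, hc] at habc; linarith
    exact ⟨ha, hb, hc⟩
  · exfalso
    have hc : c = 3 / 2 := by linarith
    have hb : b = 3 := by rw [hc] at hb6; linarith
    have ha : a = 3 / 2 := by rw [hb, hc] at habc; linarith
    rw [ha, hb, hc] at P2
    norm_num at P2
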